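/- arXiv:1506.01747 — 3 statements merged into one kernel-verified Lean document; each statement's English description precedes it below -/
import Mathlib

section
/- Let S be a finite set with |S| ≥ k, a ∉ S, T = S ∪ {a}, and w : T → ℝ strictly positive. Let (X_1,…,X_k) be a k-sample without replacement from S, and define (Y_1,…,Y_k) by the cascade construction: Y_1 = a with probability w(a)/w(T), else Y_1 = X_1; and for i ≥ 1, letting Z_i be the unique element of {X_1,…,X_i, a} \ {Y_1,…,Y_i} and U_i = T \ {Y_1,…,Y_i}, set Y_{i+1} = Z_i with probability w(Z_i)/w(U_i), else Y_{i+1} = X_{i+1} (all randomizations independent). Then, almost surely, for every i ≤ k the elements Y_1,…,Y_i are pairwise distinct elements of T, {Y_1,…,Y_i} ⊆ {X_1,…,X_i, a}, and the set {X_1,…,X_i, a} \ {Y_1,…,Y_i} is a singleton; in particular Y_{i+1} ∈ T \ {Y_1,…,Y_i}, so the construction is well defined. -/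
/-!
A `k`-sample without replacement is almost surely injective: on the event that the first `j`
draws are distinct and equal to a given prefix, the law of the next draw puts total mass one on
the unused elements of `S`, so a repetition has probability zero. For an injective `X` the
cascade keeps the invariant that `{Y 0, …, Y i}` is an `(i+1)`-element subset of the
`(i+2)`-element set `{X 0, …, X i, a}`, so exactly one element `Z i` is left over; both candidates
`Z i` and `X (i+1)` for `Y (i+1)` are then new, and the invariant propagates.
-/

open MeasureTheory Finset

lemma Function.injective_of_forall_injOn_Iio {ι β : Type*} [LinearOrder ι] [WellFoundedLT ι]
    {f : ι → β} (h : ∀ j, Set.InjOn f (Set.Iio j) → f j ∉ f '' Set.Iio j) :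
    Function.Injective f := by
  have hIic : ∀ j, Set.InjOn f (Set.Iic j) := by
    intro j
    induction j using WellFoundedLT.induction with
    | _ j ih =>
      have hIio : Set.InjOn f (Set.Iio j) := fun l hl l' hl' =>
        ih (max l l') (max_lt hl hl') (le_max_left l l') (le_max_right l l')
      rw [← Set.Iio_insert, Set.injOn_insert Set.self_notMem_Iio]
      exact ⟨hIio, h j hIio⟩
  exact fun l l' => hIic (max l l') (le_max_left l l') (le_max_right l l')

section Update

variable {ι β : Type*} [LinearOrder ι] [DecidableEq ι] {x : ι → β} {j : ι} {b : β}

lemma Set.InjOn.update_Iic (hx : Set.InjOn x (Set.Iio j)) (hb : b ∉ x '' Set.Iio j) :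
    Set.InjOn (Function.update x j b) (Set.Iic j) := by
  rw [← Set.Iio_insert, Set.injOn_insert Set.self_notMem_Iio, Function.update_self]
  refine ⟨hx.congr fun l hl => (Function.update_of_ne hl.ne _ _).symm, ?_⟩
  rintro ⟨l, hl, hlb⟩
  exact hb ⟨l, hl, by rwa [Function.update_of_ne hl.ne] at hlb⟩

lemma forall_le_eq_update_iff {v : ι → β} :
    (∀ l, l ≤ j → v l = Function.update x j b l) ↔ (∀ l, l < j → v l = x l) ∧ v j = b := by
  constructor
  · intro h
    exact ⟨fun l hl => (h l hl.le).trans (Function.update_of_ne hl.ne _ _),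
      (h j le_rfl).trans (Function.update_self ..)⟩
  · rintro ⟨hlt, hj⟩ l hl
    rcases hl.lt_or_eq with hl | rfl
    · rw [Function.update_of_ne hl.ne]; exact hlt l hl
    · rw [Function.update_self]; exact hj

end Update

section Sample

variable {Ω α : Type*} [MeasurableSpace Ω] [DecidableEq α] {k : ℕ} {μ : Measure Ω}
  {S : Finset α} {w : α → ℝ} {X : Fin k → Ω → α}

/-- The law of a `k`-sample without replacement in chain-rule form: given an injective prefix,
the next draw is a weighted sample from the unused elements of `S`. -/
def IsSampleWithoutReplacement (μ : Measure Ω) (S : Finset α) (w : α → ℝ)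
    (X : Fin k → Ω → α) : Prop :=
  ∀ (j : Fin k) (x : Fin k → α),
    (∀ l, l ≤ j → x l ∈ S) →
    (∀ l l', l ≤ j → l' ≤ j → l ≠ l' → x l ≠ x l') →
    μ {ω | ∀ l, l ≤ j → X l ω = x l} =
      ENNReal.ofReal (w (x j) / ∑ c ∈ S \ (univ.filter (· < j)).image x, w c) *
        μ {ω | ∀ l, l < j → X l ω = x l}

lemma IsSampleWithoutReplacement.measure_prefix_inter_preimage_singleton
    (hX : IsSampleWithoutReplacement μ S w X) {j : Fin k} {x : Fin k → α}
    (hxS : ∀ l, l < j → x l ∈ S) (hx : Set.InjOn x (Set.Iio j)) {b : α}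
    (hb : b ∈ S \ (univ.filter (· < j)).image x) :
    μ ({ω | ∀ l, l < j → X l ω = x l} ∩ X j ⁻¹' {b}) =
      ENNReal.ofReal (w b / ∑ c ∈ S \ (univ.filter (· < j)).image x, w c) *
        μ {ω | ∀ l, l < j → X l ω = x l} := by
  obtain ⟨hbS, hbx⟩ := mem_sdiff.1 hb
  have hupd : ∀ l, l < j → Function.update x j b l = x l :=
    fun l hl => Function.update_of_ne hl.ne _ _
  have hupdS : ∀ l, l ≤ j → Function.update x j b l ∈ S := by
    intro l hl
    rcases hl.lt_or_eq with hl | rfl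
    · rw [hupd l hl]; exact hxS l hl
    · rwa [Function.update_self]
  have hupdinj : Set.InjOn (Function.update x j b) (Set.Iic j) :=
    hx.update_Iic fun ⟨l, hl, hlb⟩ => hbx (mem_image.2 ⟨l, by simpa using hl, hlb⟩)
  have hevent : {ω | ∀ l, l < j → X l ω = x l} ∩ X j ⁻¹' {b} =
      {ω | ∀ l, l ≤ j → X l ω = Function.update x j b l} := by
    ext ω
    simp only [Set.mem_inter_iff, Set.mem_ofPred_eq, Set.mem_preimage, Set.mem_singleton_iff,
      forall_le_eq_update_iff]
  have hprefix : {ω | ∀ l, l < j → X l ω = Function.update x j b l} =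
      {ω | ∀ l, l < j → X l ω = x l} := by
    ext ω; simp +contextual only [Set.mem_ofPred_eq, hupd]
  have himage : (univ.filter (· < j)).image (Function.update x j b) =
      (univ.filter (· < j)).image x :=
    image_congr fun l hl => hupd l (mem_filter.1 hl).2
  rw [hevent, hX j _ hupdS fun l l' hl hl' hne h => hne (hupdinj hl hl' h), hprefix, himage,
    Function.update_self]

lemma IsSampleWithoutReplacement.measure_prefix_inter_repeat_eq_zero [MeasurableSpace α]
    [MeasurableSingletonClass α] [IsFiniteMeasure μ]
    (hX : IsSampleWithoutReplacement μ S w X) (hXmeas : ∀ j, Measurable (X j))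
    (hXS : ∀ j ω, X j ω ∈ S) (hw : ∀ c ∈ S, 0 < w c) (hk : k ≤ S.card) {j : Fin k}
    {x : Fin k → α} (hxS : ∀ l, l < j → x l ∈ S) (hx : Set.InjOn x (Set.Iio j)) :
    μ ({ω | ∀ l, l < j → X l ω = x l} ∩ X j ⁻¹' ↑((univ.filter (· < j)).image x)) = 0 := by
  set E := {ω | ∀ l, l < j → X l ω = x l}
  set s := (univ.filter (· < j)).image x
  set W := ∑ c ∈ S \ s, w c
  have hE : MeasurableSet E := by measurability
  have hW : 0 < W := by
    have hs : s.card < S.card := calc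
      s.card ≤ (univ.filter (· < j)).card := card_image_le
      _ = j := by rw [filter_gt_eq_Iio, Fin.card_Iio]
      _ < S.card := lt_of_lt_of_le j.isLt hk
    exact sum_pos (fun c hc => hw c (mem_sdiff.1 hc).1)
      (by simpa [← card_pos] using (le_card_sdiff s S).trans_lt' (by omega))
  have hfresh : μ (E ∩ X j ⁻¹' ↑(S \ s)) = μ E := by
    rw [Set.inter_comm, ← Measure.restrict_apply' hE, ← sum_measure_preimage_singleton _
      fun b _ => hXmeas j (measurableSet_singleton b)]
    simp only [Measure.restrict_apply' hE, Set.inter_comm _ E]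
    rw [sum_congr rfl fun b hb => hX.measure_prefix_inter_preimage_singleton hxS hx hb,
      ← sum_mul, ← ENNReal.ofReal_sum_of_nonneg
      fun b hb => div_nonneg (hw b (mem_sdiff.1 hb).1).le hW.le, ← sum_div, div_self hW.ne',
      ENNReal.ofReal_one, one_mul]
  have hsplit : E ∩ X j ⁻¹' ↑s = E \ X j ⁻¹' ↑(S \ s) := by
    ext ω
    simp [hXS j ω]
  have := measure_inter_add_sdiff (μ := μ) E (hXmeas j (S \ s).measurableSet)
  rw [hfresh, ← hsplit] at this
  simpa using (ENNReal.add_right_inj (measure_ne_top μ E)).1 (this.trans (add_zero _).symm)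

theorem IsSampleWithoutReplacement.ae_injective [MeasurableSpace α]
    [MeasurableSingletonClass α] [IsFiniteMeasure μ]
    (hX : IsSampleWithoutReplacement μ S w X) (hXmeas : ∀ j, Measurable (X j))
    (hXS : ∀ j ω, X j ω ∈ S) (hw : ∀ c ∈ S, 0 < w c) (hk : k ≤ S.card) :
    ∀ᵐ ω ∂μ, Function.Injective fun j => X j ω := by
  have hnull : ∀ x ∈ Fintype.piFinset fun _ : Fin k => S, ∀ᵐ ω ∂μ, ∀ j,
      Set.InjOn x (Set.Iio j) →
        ω ∉ {ω | ∀ l, l < j → X l ω = x l} ∩ X j ⁻¹' ↑((univ.filter (· < j)).image x) := by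
    intro x hx
    refine ae_all_iff.2 fun j => ?_
    by_cases hinj : Set.InjOn x (Set.Iio j)
    · filter_upwards [measure_eq_zero_iff_ae_notMem.1 (hX.measure_prefix_inter_repeat_eq_zero
        hXmeas hXS hw hk (fun l _ => Fintype.mem_piFinset.1 hx l) hinj)] with ω hω _ using hω
    · exact Filter.Eventually.of_forall fun ω h => absurd h hinj
  filter_upwards [(Filter.eventually_all_finset _).2 hnull] with ω hω
  refine Function.injective_of_forall_injOn_Iio fun j hinj hrep =>
    hω _ (Fintype.mem_piFinset.2 fun l => hXS l ω) j hinj ⟨fun l _ => rfl, ?_⟩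
  simpa using hrep

end Sample

section Cascade

variable {α : Type*} [DecidableEq α] {k : ℕ}

lemma Fin.filter_val_le_zero (hk : 0 < k) :
    univ.filter (fun l : Fin k => l.val ≤ 0) = {⟨0, hk⟩} := by
  ext l; simp [Fin.ext_iff]

lemma Fin.filter_val_le_succ {n : ℕ} (hn : n + 1 < k) :
    univ.filter (fun l : Fin k => l.val ≤ n + 1) =
      insert ⟨n + 1, hn⟩ (univ.filter fun l : Fin k => l.val ≤ n) := by
  ext l; simp [Fin.ext_iff]; omega

lemma Fin.card_filter_val_le {n : ℕ} (hn : n < k) :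
    (univ.filter fun l : Fin k => l.val ≤ n).card = n + 1 := by
  have : (univ.filter fun l : Fin k => l.val ≤ n) = Iic ⟨n, hn⟩ := by ext; simp [Fin.le_def]
  rw [this, Fin.card_Iic]

lemma card_insert_image_filter_val_le {S : Finset α} {a : α} (ha : a ∉ S) {x : Fin k → α}
    (hxS : ∀ j, x j ∈ S) (hx : Function.Injective x) {n : ℕ} (hn : n < k) :
    (insert a ((univ.filter fun l : Fin k => l.val ≤ n).image x)).card = n + 2 := by
  rw [card_insert_of_notMem, card_image_of_injective _ hx, Fin.card_filter_val_le hn]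
  intro h
  obtain ⟨l, -, hl⟩ := mem_image.1 h
  exact ha (hl ▸ hxS l)

lemma cascade_step {A B : Finset α} {z x y : α} (hAB : A \ B = {z}) (hBA : B ⊆ A)
    (hx : x ∉ A) (hy : y = z ∨ y = x) : y ∉ B ∧ y ∈ insert x A := by
  have hz : z ∈ A \ B := hAB ▸ mem_singleton_self z
  rcases hy with rfl | rfl
  · exact ⟨(mem_sdiff.1 hz).2, mem_insert_of_mem (mem_sdiff.1 hz).1⟩
  · exact ⟨fun h => hx (hBA h), mem_insert_self _ _⟩

/-- Only the possible values of each `y i` in the cascade construction are recorded, not the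
probabilities of the coins that choose between them. -/
def IsCascade (a : α) (x y : Fin k → α) : Prop :=
  (∀ h0 : 0 < k, y ⟨0, h0⟩ = a ∨ y ⟨0, h0⟩ = x ⟨0, h0⟩) ∧
  ∀ (i : ℕ) (hi : i + 1 < k) (Z : α),
    insert a ((univ.filter fun l : Fin k => l.val ≤ i).image x) \
        ((univ.filter fun l : Fin k => l.val ≤ i).image y) = {Z} →
      y ⟨i + 1, hi⟩ = Z ∨ y ⟨i + 1, hi⟩ = x ⟨i + 1, hi⟩

variable {S : Finset α} {a : α} {x y : Fin k → α}

lemma IsCascade.next_of_subset (hy : IsCascade a x y) (ha : a ∉ S) (hxS : ∀ j, x j ∈ S)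
    (hx : Function.Injective x) {n : ℕ} (hn : n + 1 < k)
    (hBA : (univ.filter fun l : Fin k => l.val ≤ n).image y ⊆
      insert a ((univ.filter fun l : Fin k => l.val ≤ n).image x))
    (hB : ((univ.filter fun l : Fin k => l.val ≤ n).image y).card = n + 1) :
    y ⟨n + 1, hn⟩ ∉ (univ.filter fun l : Fin k => l.val ≤ n).image y ∧
      y ⟨n + 1, hn⟩ ∈ insert (x ⟨n + 1, hn⟩)
        (insert a ((univ.filter fun l : Fin k => l.val ≤ n).image x)) := by
  have hA := card_insert_image_filter_val_le ha hxS hx (n := n) (by omega)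
  obtain ⟨z, hz⟩ := card_eq_one.1 (by rw [card_sdiff_of_subset hBA, hA, hB]; omega)
  have hxnew : x ⟨n + 1, hn⟩ ∉ insert a ((univ.filter fun l : Fin k => l.val ≤ n).image x) := by
    intro h
    rcases mem_insert.1 h with h | h
    · exact ha (h ▸ hxS _)
    · obtain ⟨l, hl, hxl⟩ := mem_image.1 h
      have hl : l.val ≤ n := (mem_filter.1 hl).2
      rw [hx hxl] at hl
      exact absurd hl (by simp)
  exact cascade_step hz hBA hxnew (hy.2 n hn z hz)

lemma IsCascade.image_subset_and_card (hy : IsCascade a x y) (ha : a ∉ S)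
    (hxS : ∀ j, x j ∈ S) (hx : Function.Injective x) {n : ℕ} (hn : n < k) :
    (univ.filter fun l : Fin k => l.val ≤ n).image y ⊆
        insert a ((univ.filter fun l : Fin k => l.val ≤ n).image x) ∧
      ((univ.filter fun l : Fin k => l.val ≤ n).image y).card = n + 1 := by
  induction n with
  | zero =>
    rw [Fin.filter_val_le_zero hn, image_singleton, image_singleton]
    rcases hy.1 hn with h | h <;> simp [h]
  | succ n ih =>
    obtain ⟨hBA, hB⟩ := ih (by omega)
    obtain ⟨hnew, hmem⟩ := hy.next_of_subset ha hxS hx hn hBA hB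
    rw [Fin.filter_val_le_succ hn, image_insert, image_insert, card_insert_of_notMem hnew, hB,
      insert_comm]
    exact ⟨insert_subset hmem (hBA.trans (subset_insert _ _)), rfl⟩

lemma IsCascade.wellDefined (hy : IsCascade a x y) (ha : a ∉ S) (hxS : ∀ j, x j ∈ S)
    (hx : Function.Injective x) (i : Fin k) :
    (∀ l l', l ≤ i → l' ≤ i → l ≠ l' → y l ≠ y l') ∧
      (∀ l, l ≤ i → y l ∈ insert a S) ∧
      (∀ l, l ≤ i → y l ∈ insert a ((univ.filter (· ≤ i)).image x)) ∧
      ((insert a ((univ.filter (· ≤ i)).image x) \ (univ.filter (· ≤ i)).image y).card = 1) ∧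
      (∀ hi : i.val + 1 < k, y ⟨i.val + 1, hi⟩ ∈ insert a S \ (univ.filter (· ≤ i)).image y) := by
  have hpre : univ.filter (· ≤ i) = univ.filter fun l : Fin k => l.val ≤ i.val := rfl
  have hAS : insert a ((univ.filter (· ≤ i)).image x) ⊆ insert a S :=
    insert_subset_insert a (image_subset_iff.2 fun l _ => hxS l)
  obtain ⟨hBA, hB⟩ := hy.image_subset_and_card ha hxS hx i.isLt
  rw [← hpre] at hBA hB
  have hinj : Set.InjOn y ↑(univ.filter (· ≤ i)) :=
    card_image_iff.1 (by rw [hB, hpre, Fin.card_filter_val_le i.isLt])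
  have hyA : ∀ l, l ≤ i → y l ∈ insert a ((univ.filter (· ≤ i)).image x) :=
    fun l hl => hBA (mem_image_of_mem y (by simpa using hl))
  refine ⟨fun l l' hl hl' hne h => hne (hinj (by simpa using hl) (by simpa using hl') h),
    fun l hl => hAS (hyA l hl), hyA, ?_, fun hi => ?_⟩
  · rw [card_sdiff_of_subset hBA, hB, hpre, card_insert_image_filter_val_le ha hxS hx i.isLt]
    omega
  · rw [hpre] at hBA hB ⊢
    obtain ⟨hnew, hmem⟩ := hy.next_of_subset ha hxS hx hi hBA hB
    exact mem_sdiff.2 ⟨insert_subset (mem_insert_of_mem (hxS _)) hAS hmem, hnew⟩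

end Cascade

theorem statement5_general {Ω α : Type*} [MeasurableSpace Ω] [MeasurableSpace α]
    [MeasurableSingletonClass α] [DecidableEq α]
    (μ : Measure Ω) [IsProbabilityMeasure μ]
    (S : Finset α) (a : α) (ha : a ∉ S)
    (w : α → ℝ) (hw : ∀ c ∈ insert a S, 0 < w c)
    (k : ℕ) (hk : k ≤ S.card)
    (X : Fin k → Ω → α)
    (hXmeas : ∀ j, Measurable (X j))
    (hXS : ∀ (j : Fin k) (ω : Ω), X j ω ∈ S)
    -- `X` is a `k`-sample without replacement from `S` (sequential definition):
    (hXlaw : ∀ (j : Fin k) (x : Fin k → α),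
      (∀ l, l ≤ j → x l ∈ S) →
      (∀ l l', l ≤ j → l' ≤ j → l ≠ l' → x l ≠ x l') →
      μ {ω | ∀ l, l ≤ j → X l ω = x l} =
        ENNReal.ofReal
            (w (x j) / ∑ c ∈ S \ (Finset.univ.filter (· < j)).image x, w c) *
          μ {ω | ∀ l, l < j → X l ω = x l})
    (B : Fin k → Set Ω)
    (Y : Fin k → Ω → α)
    -- the cascade update rules:
    (hY0 : ∀ (h0 : 0 < k) (ω : Ω),
      (ω ∈ B ⟨0, h0⟩ → Y ⟨0, h0⟩ ω = a) ∧ (ω ∉ B ⟨0, h0⟩ → Y ⟨0, h0⟩ ω = X ⟨0, h0⟩ ω))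
    (hYsucc : ∀ (i : ℕ) (hi : i + 1 < k) (ω : Ω) (Z : α),
      insert a ((Finset.univ.filter fun l : Fin k => l.val ≤ i).image fun l => X l ω) \
          ((Finset.univ.filter fun l : Fin k => l.val ≤ i).image fun l => Y l ω) = {Z} →
      (ω ∈ B ⟨i + 1, hi⟩ → Y ⟨i + 1, hi⟩ ω = Z) ∧
        (ω ∉ B ⟨i + 1, hi⟩ → Y ⟨i + 1, hi⟩ ω = X ⟨i + 1, hi⟩ ω)) :
    ∀ᵐ ω ∂μ, ∀ i : Fin k,
      (∀ l l', l ≤ i → l' ≤ i → l ≠ l' → Y l ω ≠ Y l' ω) ∧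
      (∀ l, l ≤ i → Y l ω ∈ insert a S) ∧
      (∀ l, l ≤ i →
        Y l ω ∈ insert a ((Finset.univ.filter (· ≤ i)).image fun j => X j ω)) ∧
      ((insert a ((Finset.univ.filter (· ≤ i)).image fun j => X j ω) \
          ((Finset.univ.filter (· ≤ i)).image fun j => Y j ω)).card = 1) ∧
      (∀ hi : i.val + 1 < k,
        Y ⟨i.val + 1, hi⟩ ω ∈
          (insert a S) \ ((Finset.univ.filter (· ≤ i)).image fun j => Y j ω)) := by
  have hXinj := IsSampleWithoutReplacement.ae_injective hXlaw hXmeas hXS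
    (fun c hc => hw c (mem_insert_of_mem hc)) hk
  filter_upwards [hXinj] with ω hω
  have hcascade : IsCascade a (fun j => X j ω) (fun j => Y j ω) :=
    ⟨fun h0 => (em _).imp (hY0 h0 ω).1 (hY0 h0 ω).2,
      fun i hi Z hZ => (em _).imp (hYsucc i hi ω Z hZ).1 (hYsucc i hi ω Z hZ).2⟩
  exact hcascade.wellDefined ha (fun j => hXS j ω) hω

/-- **well-definedness of the cascade construction.**  Let `S` be a finite
set with `|S| ≥ k`, `a ∉ S`, `T = insert a S`, `w` strictly positive on `T`.  Let
`(X 0, …, X (k-1))` be a `k`-sample without replacement from `S`, and let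
`(Y 0, …, Y (k-1))` be given by the cascade construction (with coin flips `B i` of the
appropriate conditional probabilities, independent of everything else).  Then, almost
surely, for every `i < k`: the elements `Y 0, …, Y i` are pairwise distinct elements of
`T`, `{Y 0, …, Y i} ⊆ {X 0, …, X i, a}`, the set `{X 0, …, X i, a} \ {Y 0, …, Y i}` is a
singleton, and `Y (i+1) ∈ T \ {Y 0, …, Y i}` (whenever `i + 1 < k`); so the construction
is well defined. -/
theorem statement5 {Ω α : Type*} [MeasurableSpace Ω] [MeasurableSpace α]
    [MeasurableSingletonClass α] [DecidableEq α]
    (μ : Measure Ω) [IsProbabilityMeasure μ]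
    (S : Finset α) (a : α) (ha : a ∉ S)
    (w : α → ℝ) (hw : ∀ c ∈ insert a S, 0 < w c)
    (k : ℕ) (hk : k ≤ S.card)
    (X : Fin k → Ω → α)
    (hXmeas : ∀ j, Measurable (X j))
    (hXS : ∀ (j : Fin k) (ω : Ω), X j ω ∈ S)
    -- `X` is a `k`-sample without replacement from `S` (sequential definition):
    (hXlaw : ∀ (j : Fin k) (x : Fin k → α),
      (∀ l, l ≤ j → x l ∈ S) →
      (∀ l l', l ≤ j → l' ≤ j → l ≠ l' → x l ≠ x l') →
      μ {ω | ∀ l, l ≤ j → X l ω = x l} =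
        ENNReal.ofReal
            (w (x j) / ∑ c ∈ S \ (Finset.univ.filter (· < j)).image x, w c) *
          μ {ω | ∀ l, l < j → X l ω = x l})
    (B : Fin k → Set Ω) (hBmeas : ∀ i, MeasurableSet (B i))
    (Y : Fin k → Ω → α) (hYmeas : ∀ i, Measurable (Y i))
    -- the cascade update rules:
    (hY0 : ∀ (h0 : 0 < k) (ω : Ω),
      (ω ∈ B ⟨0, h0⟩ → Y ⟨0, h0⟩ ω = a) ∧ (ω ∉ B ⟨0, h0⟩ → Y ⟨0, h0⟩ ω = X ⟨0, h0⟩ ω))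
    (hYsucc : ∀ (i : ℕ) (hi : i + 1 < k) (ω : Ω) (Z : α),
      insert a ((Finset.univ.filter fun l : Fin k => l.val ≤ i).image fun l => X l ω) \
          ((Finset.univ.filter fun l : Fin k => l.val ≤ i).image fun l => Y l ω) = {Z} →
      (ω ∈ B ⟨i + 1, hi⟩ → Y ⟨i + 1, hi⟩ ω = Z) ∧
        (ω ∉ B ⟨i + 1, hi⟩ → Y ⟨i + 1, hi⟩ ω = X ⟨i + 1, hi⟩ ω))
    -- the coin `B i` lands heads with (conditional) probability `w Z / w (U (i-1))`,
    -- independently of everything else: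
    (hBcond : ∀ (i : Fin k) (x y : Fin k → α) (Z : α),
      insert a ((Finset.univ.filter (· < i)).image x) \
          ((Finset.univ.filter (· < i)).image y) = {Z} →
      μ (B i ∩ {ω | (∀ l, X l ω = x l) ∧ ∀ l, l < i → Y l ω = y l}) =
        ENNReal.ofReal
            (w Z /
              ∑ c ∈ (insert a S) \ (Finset.univ.filter (· < i)).image y, w c) *
          μ {ω | (∀ l, X l ω = x l) ∧ ∀ l, l < i → Y l ω = y l}) :
    ∀ᵐ ω ∂μ, ∀ i : Fin k,
      (∀ l l', l ≤ i → l' ≤ i → l ≠ l' → Y l ω ≠ Y l' ω) ∧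
      (∀ l, l ≤ i → Y l ω ∈ insert a S) ∧
      (∀ l, l ≤ i →
        Y l ω ∈ insert a ((Finset.univ.filter (· ≤ i)).image fun j => X j ω)) ∧
      ((insert a ((Finset.univ.filter (· ≤ i)).image fun j => X j ω) \
          ((Finset.univ.filter (· ≤ i)).image fun j => Y j ω)).card = 1) ∧
      (∀ hi : i.val + 1 < k,
        Y ⟨i.val + 1, hi⟩ ω ∈
          (insert a S) \ ((Finset.univ.filter (· ≤ i)).image fun j => Y j ω)) :=
  statement5_general μ S a ha w hw k hk X hXmeas hXS hXlaw B Y hY0 hYsucc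
end

section
/- Let S be a finite set, a ∉ S, T = S ∪ {a}, and w : T → ℝ strictly positive. Fix i ≥ 1 and pairwise distinct x_1,…,x_i ∈ S and pairwise distinct y_1,…,y_i ∈ {x_1,…,x_i, a}; let Z_i be the unique element of {x_1,…,x_i, a} \ {y_1,…,y_i}, U_i = T \ {y_1,…,y_i}, V_i = U_i \ {Z_i}, and H_i = S \ {x_1,…,x_i}. Let X_{i+1} be a unit weighted sample from H_i and define Y_{i+1} = Z_i with probability w(Z_i)/w(U_i) and Y_{i+1} = X_{i+1} otherwise (independent randomization). Then for every b ∈ U_i, P(Y_{i+1} = b) = w(b)/w(U_i). -/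
open MeasureTheory Finset

/-- Let `S` be a finite set, `a ∉ S`, `T = insert a S`, and `w` strictly
positive on `T`.  Fix `i ≥ 1`, pairwise distinct `x 0, …, x (i-1) ∈ S` and pairwise
distinct `y 0, …, y (i-1) ∈ {x 0, …, x (i-1), a}`; let `Z` be the unique element of
`{x 0, …, x (i-1), a} \ {y 0, …, y (i-1)}`, `U = T \ {y 0, …, y (i-1)}` and
`H = S \ {x 0, …, x (i-1)}`.  Let `X` be a unit weighted sample from `H`, let `B` be an
event of probability `w Z / w U` independent of `X`, and set `Y ω = Z` on `B` and
`Y ω = X ω` off `B`.  Then `P(Y = b) = w b / w U` for every `b ∈ U`. -/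
theorem statement6 {Ω α : Type*} [MeasurableSpace Ω] [MeasurableSpace α]
    [MeasurableSingletonClass α] [DecidableEq α]
    (μ : Measure Ω) [IsProbabilityMeasure μ]
    (S : Finset α) (a : α) (ha : a ∉ S)
    (w : α → ℝ) (hw : ∀ c ∈ insert a S, 0 < w c)
    (i : ℕ) (hi : 1 ≤ i)
    (x y : Fin i → α)
    (hx : ∀ j, x j ∈ S) (hxinj : Function.Injective x)
    (hy : ∀ j, y j ∈ insert a (Finset.image x Finset.univ))
    (hyinj : Function.Injective y)
    (Z : α)
    (hZ : insert a (Finset.image x Finset.univ) \ Finset.image y Finset.univ = {Z})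
    (X : Ω → α) (hXmeas : Measurable X)
    (hXH : ∀ ω, X ω ∈ S \ Finset.image x Finset.univ)
    (hXlaw : ∀ b ∈ S \ Finset.image x Finset.univ,
      μ {ω | X ω = b} =
        ENNReal.ofReal (w b / ∑ c ∈ S \ Finset.image x Finset.univ, w c))
    (B : Set Ω) (hBmeas : MeasurableSet B)
    (hB : μ B =
      ENNReal.ofReal (w Z / ∑ c ∈ (insert a S) \ Finset.image y Finset.univ, w c))
    (hindep : ∀ b : α, μ (B ∩ {ω | X ω = b}) = μ B * μ {ω | X ω = b})
    (Y : Ω → α) (hYin : ∀ ω ∈ B, Y ω = Z) (hYout : ∀ ω ∉ B, Y ω = X ω) :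
    ∀ b ∈ (insert a S) \ Finset.image y Finset.univ,
      μ {ω | Y ω = b} =
        ENNReal.ofReal (w b / ∑ c ∈ (insert a S) \ Finset.image y Finset.univ, w c) := by
  intro b hb
  set Ix := Finset.image x Finset.univ with hIx
  set Iy := Finset.image y Finset.univ with hIy
  set H := S \ Ix with hH
  set U := (insert a S) \ Iy with hUdef
  -- basic facts
  have hZmem : Z ∈ insert a Ix \ Iy := by rw [hZ]; exact mem_singleton_self Z
  have hZnotH : Z ∉ H := by
    have := (mem_sdiff.mp hZmem).1
    rcases mem_insert.mp this with h | h
    · intro hc; exact ha (h ▸ (mem_sdiff.mp hc).1)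
    · intro hc; exact (mem_sdiff.mp hc).2 h
  have hZ' : ∀ c, c ∈ insert a Ix ∧ c ∉ Iy ↔ c = Z := by
    intro c
    rw [← mem_sdiff, hZ, mem_singleton]
  have hIxS : ∀ c, c ∈ Ix → c ∈ S := by
    intro c hc
    simp only [hIx, mem_image] at hc
    obtain ⟨j, _, rfl⟩ := hc; exact hx j
  have hIyT : ∀ c, c ∈ Iy → c ∈ insert a Ix := by
    intro c hc
    simp only [hIy, mem_image] at hc
    obtain ⟨j, _, rfl⟩ := hc; exact hy j
  -- U = insert Z H
  have hU : U = insert Z H := by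
    ext c
    simp only [hUdef, hH, mem_sdiff, mem_insert]
    constructor
    · rintro ⟨hc1, hc2⟩
      by_cases hcx : c ∈ Ix
      · left; exact (hZ' c).mp ⟨mem_insert.mpr (Or.inr hcx), hc2⟩
      · rcases hc1 with rfl | hcS
        · left; exact (hZ' c).mp ⟨mem_insert_self _ _, hc2⟩
        · right; exact ⟨hcS, hcx⟩
    · rintro (rfl | ⟨hcS, hcx⟩)
      · constructor
        · rcases mem_insert.mp (mem_sdiff.mp hZmem).1 with h | h
          · exact Or.inl h
          · exact Or.inr (hIxS _ h)
        · exact (mem_sdiff.mp hZmem).2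
      · refine ⟨Or.inr hcS, fun hcy => ?_⟩
        rcases mem_insert.mp (hIyT _ hcy) with rfl | h
        · exact ha hcS
        · exact hcx h
  -- nonemptiness of Ω and H
  have hΩ : Nonempty Ω := by
    by_contra h
    have h1 : μ Set.univ = 1 := measure_univ
    rw [Set.univ_eq_empty_iff.mpr (not_nonempty_iff.mp h)] at h1
    simp at h1
  obtain ⟨ω0⟩ := hΩ
  have hHne : (X ω0) ∈ H := hXH ω0
  -- positivity
  have hwH : 0 < ∑ c ∈ H, w c := by
    apply Finset.sum_pos
    · intro c hc
      exact hw c (mem_insert.mpr (Or.inr (mem_sdiff.mp hc).1))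
    · exact ⟨_, hHne⟩
  have hwZ : 0 < w Z := by
    apply hw
    rcases mem_insert.mp (mem_sdiff.mp hZmem).1 with h | h
    · exact h ▸ mem_insert_self _ _
    · exact mem_insert.mpr (Or.inr (hIxS _ h))
  have hsum : ∑ c ∈ U, w c = w Z + ∑ c ∈ H, w c := by
    rw [hU, Finset.sum_insert hZnotH]
  have hwU : 0 < ∑ c ∈ U, w c := by rw [hsum]; positivity
  -- case split on b
  rw [hU] at hb
  rcases mem_insert.mp hb with hbZ | hbH
  case inl =>
    -- b = Z : {Y = Z} = B
    have hset : {ω | Y ω = b} = B := by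
      ext ω
      simp only [Set.mem_setOf_eq]
      constructor
      · intro h
        by_contra hωB
        rw [hYout ω hωB, hbZ] at h
        exact hZnotH (h ▸ hXH ω)
      · intro h; rw [hYin ω h, hbZ]
    rw [hset, hbZ, hB]
  · -- b ∈ H
    have hbne : b ≠ Z := fun h => hZnotH (h ▸ hbH)
    have hset : {ω | Y ω = b} = {ω | X ω = b} \ B := by
      ext ω
      simp only [Set.mem_setOf_eq, Set.mem_diff]
      constructor
      · intro h
        have hωB : ω ∉ B := fun hωB => hbne (h ▸ (hYin ω hωB).symm ▸ rfl)
        exact ⟨(hYout ω hωB) ▸ h, hωB⟩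
      · rintro ⟨h1, h2⟩; rw [hYout ω h2]; exact h1
    have hXb : μ {ω | X ω = b} = ENNReal.ofReal (w b / ∑ c ∈ H, w c) := hXlaw b hbH
    have hdiff : μ ({ω | X ω = b} \ B) = μ {ω | X ω = b} - μ (B ∩ {ω | X ω = b}) := by
      rw [Set.inter_comm]
      rw [← measure_inter_add_diff {ω | X ω = b} hBmeas]
      rw [ENNReal.add_sub_cancel_left (measure_ne_top μ _)]
    rw [hset, hdiff, hindep b, hXb, hB]
    have hwb : 0 < w b := hw b (mem_insert.mpr (Or.inr (mem_sdiff.mp hbH).1))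
    rw [← ENNReal.ofReal_mul (by positivity)]
    rw [← ENNReal.ofReal_sub _ (by positivity)]
    congr 1
    have h1 : ∑ c ∈ U, w c ≠ 0 := ne_of_gt hwU
    have h2 : ∑ c ∈ H, w c ≠ 0 := ne_of_gt hwH
    field_simp
    ring_nf
    rw [hsum]
    ring
end

section
/- (Correctness of Cascade Sampling over a stream) Let p_1, p_2, …, p_n be distinct elements with strictly positive weights, and let k ≤ n. Suppose (Y_1,…,Y_k) is distributed as a k-sample without replacement from S_m = {p_1,…,p_m} for some m with k ≤ m < n, and let (Y'_1,…,Y'_k) be obtained from (Y_1,…,Y_k) by the cascade update with the new element a = p_{m+1} (i.e., the construction of the Cascade Lemma applied with S = S_m, T = S_m ∪ {p_{m+1}}). Then (Y'_1,…,Y'_k) is a k-sample without replacement from S_{m+1} = {p_1,…,p_{m+1}}; consequently, by induction starting from any k-sample without replacement from {p_1,…,p_k}, the output of Cascade Sampling after processing all of p_1,…,p_n is a k-sample without replacement from {p_1,…,p_n}. -/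
/-!
Condition on the old sample `X = x`. Given `x`, the update is a run of coin flips, and the
element held back before step `j` is a function `carry` of `x` and of the outputs so far; so the
probability that the update outputs `y` is a product `cascadeProb` of coin probabilities, and
`P(X' = y) = ∑ₓ sampleProb_S(x) · cascadeProb(x, y)`.

This sum equals `sampleProb_T(y)`. Peel off the first coordinate. If `y₀` is the held element
`z`, every first input `c` is possible, becomes the held element, and `∑_c w c / w S = 1`. If
not, only `c = y₀` contributes, with weight `w y₀ / w S · (1 - w z / w T) = w y₀ / w T`, since
`w T = w z + w S`. In both cases what is left is the same identity for one fewer coordinate,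
with a new held element and a smaller pool.
-/

open MeasureTheory Finset

def initSeg (k i : ℕ) : Finset (Fin k) := univ.filter fun l => l.val < i

@[simp] lemma mem_initSeg {k i : ℕ} {l : Fin k} : l ∈ initSeg k i ↔ l.val < i := by
  simp [initSeg]

lemma initSeg_zero (k : ℕ) : initSeg k 0 = ∅ := by ext; simp

lemma initSeg_self (k : ℕ) : initSeg k k = univ := by ext l; simp [l.isLt]

lemma initSeg_succ {k i : ℕ} (h : i < k) :
    initSeg k (i + 1) = insert ⟨i, h⟩ (initSeg k i) := by
  ext l; simp [Fin.ext_iff]; omega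

lemma card_initSeg {k i : ℕ} (h : i ≤ k) : #(initSeg k i) = i := by
  rw [initSeg, Fin.card_filter_val_lt, min_eq_right h]

lemma filter_lt_eq_initSeg {k : ℕ} (j : Fin k) : univ.filter (· < j) = initSeg k j := by
  ext l; simp only [mem_filter, mem_univ, true_and, mem_initSeg]; exact Fin.lt_def

lemma filter_val_le_eq_initSeg (k i : ℕ) :
    univ.filter (fun l : Fin k => l.val ≤ i) = initSeg k (i + 1) := by
  ext l; simp

lemma sum_filter_lt_succ {M : Type*} [AddCommMonoid M] {n : ℕ} (f : Fin (n + 1) → M)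
    (j : Fin n) :
    ∑ l ∈ univ.filter (· < j.succ), f l = f 0 + ∑ l ∈ univ.filter (· < j), f l.succ := by
  simp [Finset.sum_filter, Fin.sum_univ_succ, Fin.succ_pos]

lemma sum_sdiff_image_eq_sub {ι α : Type*} [DecidableEq α] {s : Finset ι} {f : ι → α}
    {U : Finset α} (hf : Set.InjOn f s) (hU : s.image f ⊆ U) (w : α → ℝ) :
    ∑ c ∈ U \ s.image f, w c = ∑ c ∈ U, w c - ∑ i ∈ s, w (f i) := by
  rw [sum_sdiff_eq_sub hU, sum_image hf]

lemma setOf_and_forall_lt_succ {Ω α : Type*} {k i : ℕ} (h : i < k) (P : Ω → Prop)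
    (f : Fin k → Ω → α) (y : Fin k → α) :
    {ω | P ω ∧ ∀ l : Fin k, l.val < i + 1 → f l ω = y l} =
      {ω | P ω ∧ ∀ l : Fin k, l.val < i → f l ω = y l} ∩ {ω | f ⟨i, h⟩ ω = y ⟨i, h⟩} := by
  ext ω
  constructor
  · rintro ⟨hP, hf⟩
    exact ⟨⟨hP, fun l hl => hf l (by omega)⟩, hf _ (by simp)⟩
  · rintro ⟨⟨hP, hf⟩, hi⟩
    refine ⟨hP, fun l hl => ?_⟩
    rcases Nat.lt_succ_iff_lt_or_eq.mp hl with hl | hl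
    · exact hf l hl
    · rwa [show l = ⟨i, h⟩ from Fin.ext hl]

section SampleProb

variable {α : Type*} (w : α → ℝ)

/-- For `x` injective with values in a finite set of total weight `M`, the probability that a
weighted sample without replacement from that set begins with `x`. -/
noncomputable def sampleProb {n : ℕ} (M : ℝ) (x : Fin n → α) : ℝ :=
  ∏ j, w (x j) / (M - ∑ l ∈ univ.filter (· < j), w (x l))

lemma sampleProb_cons {n : ℕ} (M : ℝ) (c : α) (xs : Fin n → α) :
    sampleProb w M (Fin.cons c xs) = w c / M * sampleProb w (M - w c) xs := by
  have h0 : univ.filter (· < (0 : Fin (n + 1))) = ∅ := by ext l; simp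
  simp only [sampleProb, Fin.prod_univ_succ, Fin.cons_zero, Fin.cons_succ, h0, sum_empty,
    sub_zero, sum_filter_lt_succ, sub_add_eq_sub_sub]

end SampleProb

section Carry

variable {α : Type*} [DecidableEq α]

/-- The element `Z_i` of the cascade update with new element `a`, input `x` and output `y`: the
one element of `{x₀, …, x_{i-1}, a}` not among `y₀, …, y_{i-1}`, computed step by step. -/
def carry {k : ℕ} (a : α) (x y : Fin k → α) : ℕ → α
  | 0 => a
  | i + 1 =>
    if h : i < k then (if y ⟨i, h⟩ = carry a x y i then x ⟨i, h⟩ else carry a x y i)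
    else carry a x y i

lemma carry_succ {k i : ℕ} (a : α) (x y : Fin k → α) (h : i < k) :
    carry a x y (i + 1) = if y ⟨i, h⟩ = carry a x y i then x ⟨i, h⟩ else carry a x y i := by
  rw [carry, dif_pos h]

lemma carry_succ_of_le {k i : ℕ} (a : α) (x y : Fin k → α) (h : k ≤ i) :
    carry a x y (i + 1) = carry a x y i := by
  rw [carry, dif_neg (by omega)]

lemma carry_congr {k : ℕ} (a : α) (x : Fin k → α) {y y' : Fin k → α} :
    ∀ i, (∀ l : Fin k, l.val < i → y l = y' l) → carry a x y i = carry a x y' i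
  | 0, _ => rfl
  | i + 1, h => by
    have ih := carry_congr a x i fun l hl => h l (by omega)
    by_cases hi : i < k
    · rw [carry_succ a x y hi, carry_succ a x y' hi, ih, h ⟨i, hi⟩ (by simp)]
    · simp only [carry, dif_neg hi, ih]

lemma carry_cons {n : ℕ} (z c b : α) (xs ys : Fin n → α) :
    ∀ i, carry z (Fin.cons c xs : Fin (n + 1) → α) (Fin.cons b ys) (i + 1) =
      carry (if b = z then c else z) xs ys i
  | 0 => by simp [carry]
  | i + 1 => by
    by_cases hi : i < n
    · have hsucc : (⟨i + 1, by omega⟩ : Fin (n + 1)) = Fin.succ ⟨i, hi⟩ := rfl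
      rw [carry_succ _ _ _ (by omega), carry_succ _ xs ys hi, carry_cons z c b xs ys i, hsucc,
        Fin.cons_succ, Fin.cons_succ]
    · rw [carry_succ_of_le z _ _ (show n + 1 ≤ i + 1 by omega),
        carry_succ_of_le _ xs ys (show n ≤ i by omega)]
      exact carry_cons z c b xs ys i

variable {S : Finset α} {a : α} {k : ℕ} {x y : Fin k → α}

lemma insert_image_eq_insert_carry (ha : a ∉ S) (hxS : ∀ j, x j ∈ S)
    (hx : Function.Injective x) :
    ∀ i ≤ k, (∀ l : Fin k, l.val < i → y l = carry a x y l ∨ y l = x l) →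
      insert a ((initSeg k i).image x) = insert (carry a x y i) ((initSeg k i).image y) ∧
        carry a x y i ∉ (initSeg k i).image y
  | 0, _, _ => by simp [initSeg_zero, carry]
  | i + 1, hi, hcomp => by
    have hik : i < k := hi
    obtain ⟨ih, hnot⟩ := insert_image_eq_insert_carry ha hxS hx i hik.le
      fun l hl => hcomp l (by omega)
    set li : Fin k := ⟨i, hik⟩
    set c := carry a x y i
    have hfresh : x li ∉ insert a ((initSeg k i).image x) := by
      simp only [mem_insert, mem_image, mem_initSeg, not_or, not_exists, not_and]
      exact ⟨fun h => ha (h ▸ hxS li), fun l hl h => by simp [hx h, li] at hl⟩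
    have hc : c ∈ insert a ((initSeg k i).image x) := ih ▸ mem_insert_self _ _
    rw [initSeg_succ hik, image_insert, image_insert, carry_succ a x y hik, insert_comm a, ih]
    by_cases hyc : y li = c
    · rw [if_pos hyc, hyc]
      refine ⟨rfl, ?_⟩
      simp only [mem_insert, not_or]
      exact ⟨fun h => hfresh (h ▸ hc), fun h => hfresh (ih ▸ mem_insert_of_mem h)⟩
    · have hyx : y li = x li := (hcomp li (by simp [li])).resolve_left hyc
      rw [if_neg hyc, ← hyx, insert_comm]
      refine ⟨rfl, ?_⟩
      simp only [mem_insert, not_or]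
      exact ⟨Ne.symm hyc, hnot⟩

lemma insert_sdiff_image_eq_carry (ha : a ∉ S) (hxS : ∀ j, x j ∈ S)
    (hx : Function.Injective x) {i : ℕ} (hi : i ≤ k)
    (hcomp : ∀ l : Fin k, l.val < i → y l = carry a x y l ∨ y l = x l) :
    insert a ((initSeg k i).image x) \ (initSeg k i).image y = {carry a x y i} := by
  obtain ⟨h, hnot⟩ := insert_image_eq_insert_carry ha hxS hx i hi hcomp
  rw [h, insert_sdiff_cancel hnot]

lemma carry_mem_insert_image (ha : a ∉ S) (hxS : ∀ j, x j ∈ S) (hx : Function.Injective x)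
    {i : ℕ} (hi : i ≤ k) (hcomp : ∀ l : Fin k, l.val < i → y l = carry a x y l ∨ y l = x l) :
    carry a x y i ∈ insert a ((initSeg k i).image x) :=
  (insert_image_eq_insert_carry ha hxS hx i hi hcomp).1 ▸ mem_insert_self _ _

lemma apply_notMem_insert_image (ha : a ∉ S) (hxS : ∀ j, x j ∈ S) (hx : Function.Injective x)
    (j : Fin k) : x j ∉ insert a ((initSeg k j).image x) := by
  simp only [mem_insert, mem_image, mem_initSeg, not_or, not_exists, not_and]
  exact ⟨fun h => ha (h ▸ hxS j), fun l hl h => (hx h ▸ hl).false⟩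

lemma cascade_output_eq (ha : a ∉ S) (hxS : ∀ j, x j ∈ S) (hx : Function.Injective x)
    {coin : Fin k → Prop}
    (h0 : ∀ h0 : 0 < k,
      (coin ⟨0, h0⟩ → y ⟨0, h0⟩ = a) ∧ (¬ coin ⟨0, h0⟩ → y ⟨0, h0⟩ = x ⟨0, h0⟩))
    (hsucc : ∀ (i : ℕ) (hi : i + 1 < k) (Z : α),
      insert a ((univ.filter fun l : Fin k => l.val ≤ i).image x) \
          (univ.filter fun l : Fin k => l.val ≤ i).image y = {Z} →
        (coin ⟨i + 1, hi⟩ → y ⟨i + 1, hi⟩ = Z) ∧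
          (¬ coin ⟨i + 1, hi⟩ → y ⟨i + 1, hi⟩ = x ⟨i + 1, hi⟩))
    (j : Fin k) : (coin j → y j = carry a x y j) ∧ (¬ coin j → y j = x j) := by
  suffices h : ∀ i ≤ k, ∀ j : Fin k, j.val < i →
      (coin j → y j = carry a x y j) ∧ (¬ coin j → y j = x j) from h k le_rfl j j.isLt
  intro i
  induction i with
  | zero => intro _ j hj; omega
  | succ i ih =>
    intro hi j hj
    rcases Nat.lt_succ_iff_lt_or_eq.mp hj with hj | rfl
    · exact ih (by omega) j hj
    obtain ⟨_ | i, hik⟩ := j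
    · exact h0 hik
    · have hcomp (l : Fin k) (hl : l.val < i + 1) : y l = carry a x y l ∨ y l = x l := by
        by_cases hc : coin l
        exacts [Or.inl ((ih (by omega) l hl).1 hc), Or.inr ((ih (by omega) l hl).2 hc)]
      apply hsucc
      rw [filter_val_le_eq_initSeg]
      exact insert_sdiff_image_eq_carry ha hxS hx (by omega) hcomp

lemma injective_and_mem_of_cascade (ha : a ∉ S) (hxS : ∀ j, x j ∈ S)
    (hx : Function.Injective x) (hcomp : ∀ l, y l = carry a x y l ∨ y l = x l) :
    Function.Injective y ∧ ∀ j, y j ∈ insert a S := by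
  obtain ⟨h, hnot⟩ := insert_image_eq_insert_carry ha hxS hx k le_rfl fun l _ => hcomp l
  rw [initSeg_self] at h hnot
  have hax : a ∉ univ.image x := by
    simp only [mem_image, mem_univ, true_and, not_exists]
    exact fun j h => ha (h ▸ hxS j)
  have hcard := congrArg card h
  rw [card_insert_of_notMem hax, card_insert_of_notMem hnot, card_image_of_injective _ hx,
    Nat.add_right_cancel_iff] at hcard
  refine ⟨fun j j' hjj' => card_image_iff.mp hcard.symm (by simp) (by simp) hjj', fun j => ?_⟩
  have hj : y j ∈ insert a (univ.image x) :=
    h ▸ mem_insert_of_mem (mem_image_of_mem y (mem_univ j))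
  rcases mem_insert.mp hj with hj | hj
  · exact hj ▸ mem_insert_self a S
  · obtain ⟨l, -, hl⟩ := mem_image.mp hj
    exact hl ▸ mem_insert_of_mem (hxS l)

end Carry

section CascadeProb

variable {α : Type*} [DecidableEq α] (w : α → ℝ)

noncomputable def headsProb {n : ℕ} (z : α) (M : ℝ) (x y : Fin n → α) (j : Fin n) : ℝ :=
  w (carry z x y j) / (M - ∑ l ∈ univ.filter (· < j), w (y l))

noncomputable def cascadeFactor {n : ℕ} (z : α) (M : ℝ) (x y : Fin n → α) (j : Fin n) : ℝ :=
  if y j = carry z x y j then headsProb w z M x y j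
  else if y j = x j then 1 - headsProb w z M x y j else 0

noncomputable def cascadeProb {n : ℕ} (z : α) (M : ℝ) (x y : Fin n → α) : ℝ :=
  ∏ j, cascadeFactor w z M x y j

lemma cascadeProb_cons {n : ℕ} (z : α) (M : ℝ) (c b : α) (xs ys : Fin n → α) :
    cascadeProb w z M (Fin.cons c xs) (Fin.cons b ys) =
      (if b = z then w z / M else if b = c then 1 - w z / M else 0) *
        cascadeProb w (if b = z then c else z) (M - w b) xs ys := by
  have hcarry (j : Fin n) : carry z (Fin.cons c xs) (Fin.cons b ys) j.succ =
      carry (if b = z then c else z) xs ys j := by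
    rw [Fin.val_succ, carry_cons]
  have hzero : cascadeFactor w z M (Fin.cons c xs) (Fin.cons b ys) 0 =
      if b = z then w z / M else if b = c then 1 - w z / M else 0 := by
    simp [cascadeFactor, headsProb, carry]
  have hsucc (j : Fin n) : cascadeFactor w z M (Fin.cons c xs) (Fin.cons b ys) j.succ =
      cascadeFactor w (if b = z then c else z) (M - w b) xs ys j := by
    simp only [cascadeFactor, headsProb, hcarry, Fin.cons_succ, sum_filter_lt_succ,
      Fin.cons_zero, sub_add_eq_sub_sub]
  rw [cascadeProb, Fin.prod_univ_succ, hzero]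
  simp only [hsucc]
  rfl

lemma cascadeFactor_eq_zero {n : ℕ} {z : α} {M : ℝ} {x y : Fin n → α} {j : Fin n}
    (h₁ : y j ≠ carry z x y j) (h₂ : y j ≠ x j) : cascadeFactor w z M x y j = 0 := by
  rw [cascadeFactor, if_neg h₁, if_neg h₂]

def injTuples (S : Finset α) (n : ℕ) : Finset (Fin n → α) :=
  (Fintype.piFinset fun _ => S).filter Function.Injective

lemma mem_injTuples {S : Finset α} {n : ℕ} {x : Fin n → α} :
    x ∈ injTuples S n ↔ (∀ j, x j ∈ S) ∧ Function.Injective x := by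
  simp [injTuples]

lemma cons_mem_injTuples {S : Finset α} {n : ℕ} {c : α} {xs : Fin n → α} :
    (Fin.cons c xs : Fin (n + 1) → α) ∈ injTuples S (n + 1) ↔
      c ∈ S ∧ xs ∈ injTuples (S.erase c) n := by
  simp only [mem_injTuples, Fin.forall_fin_succ, Fin.cons_zero, Fin.cons_succ,
    Fin.cons_injective_iff, mem_erase, Set.mem_range, not_exists]
  grind

lemma sum_injTuples_succ {β : Type*} [AddCommMonoid β] (S : Finset α) (n : ℕ)
    (f : (Fin (n + 1) → α) → β) :
    ∑ x ∈ injTuples S (n + 1), f x =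
      ∑ c ∈ S, ∑ xs ∈ injTuples (S.erase c) n, f (Fin.cons c xs) := by
  rw [sum_sigma']
  refine sum_nbij' (fun x => ⟨x 0, Fin.tail x⟩) (fun p => Fin.cons p.1 p.2) ?_ ?_ ?_ ?_ ?_
  · intro x hx
    rw [← Fin.cons_self_tail x, cons_mem_injTuples] at hx
    simpa using hx
  · intro p hp
    simpa [cons_mem_injTuples] using hp
  · simp
  · simp
  · simp

lemma sum_sampleProb_mul_cascadeProb_cons {n : ℕ} (s : Finset (Fin n → α)) (W M : ℝ)
    (z c b : α) (ys : Fin n → α) :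
    ∑ xs ∈ s, sampleProb w W (Fin.cons c xs) * cascadeProb w z M (Fin.cons c xs) (Fin.cons b ys) =
      w c / W * (if b = z then w z / M else if b = c then 1 - w z / M else 0) *
        ∑ xs ∈ s, sampleProb w (W - w c) xs *
          cascadeProb w (if b = z then c else z) (M - w b) xs ys := by
  rw [mul_sum]
  refine sum_congr rfl fun xs _ => ?_
  rw [sampleProb_cons, cascadeProb_cons]
  ring

theorem sum_sampleProb_mul_cascadeProb {n : ℕ} {S : Finset α} {z : α} (hz : z ∉ S)
    (hw : ∀ c ∈ insert z S, 0 < w c) (hn : n ≤ #S) {y : Fin n → α}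
    (hy : Function.Injective y) (hyS : ∀ j, y j ∈ insert z S) :
    ∑ x ∈ injTuples S n,
        sampleProb w (∑ c ∈ S, w c) x * cascadeProb w z (w z + ∑ c ∈ S, w c) x y =
      sampleProb w (w z + ∑ c ∈ S, w c) y := by
  induction n generalizing S z with
  | zero =>
    simp [injTuples, sampleProb, cascadeProb, Function.injective_of_subsingleton]
  | succ n ih =>
    obtain ⟨b, ys, rfl⟩ : ∃ b ys, y = Fin.cons b ys :=
      ⟨y 0, Fin.tail y, (Fin.cons_self_tail y).symm⟩
    obtain ⟨hbys, hys⟩ := Fin.cons_injective_iff.mp hy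
    have hysT (j : Fin n) : ys j ∈ insert z S := by simpa using hyS j.succ
    set W := ∑ c ∈ S, w c
    have hW : 0 < W :=
      sum_pos (fun c hc => hw c (mem_insert_of_mem hc)) (card_pos.mp (by omega))
    have hM : w z + W ≠ 0 := by linarith [hw z (mem_insert_self z S)]
    rw [sum_injTuples_succ, sampleProb_cons]
    simp_rw [sum_sampleProb_mul_cascadeProb_cons]
    by_cases hbz : b = z
    · subst hbz
      have hsum (c : α) (hc : c ∈ S) : ∑ xs ∈ injTuples (S.erase c) n,
          sampleProb w (W - w c) xs * cascadeProb w c (w b + W - w b) xs ys =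
            sampleProb w (w b + W - w b) ys := by
        have hT : insert c (S.erase c) = S := insert_erase hc
        have := ih (notMem_erase c S) (by rw [hT]; exact fun d hd => hw d (mem_insert_of_mem hd))
          (by rw [card_erase_of_mem hc]; omega) hys fun j => by
            rw [hT]; exact (mem_insert.mp (hysT j)).resolve_left fun h => hbys ⟨j, h⟩
        rw [add_sum_erase S w hc] at this
        rwa [add_sub_cancel_left, ← sum_erase_eq_sub hc]
      simp only [↓reduceIte]
      rw [sum_congr rfl fun c hc => by rw [hsum c hc], ← sum_mul, ← sum_mul, ← sum_div,
        div_self hW.ne', one_mul]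
    · have hbS : b ∈ S := (mem_insert.mp (by simpa using hyS 0)).resolve_left hbz
      have hsum : ∑ xs ∈ injTuples (S.erase b) n,
          sampleProb w (W - w b) xs * cascadeProb w z (w z + W - w b) xs ys =
            sampleProb w (w z + W - w b) ys := by
        have := ih (fun h => hz (mem_of_mem_erase h))
          (fun d hd => hw d (insert_subset_insert z (erase_subset b S) hd))
          (by rw [card_erase_of_mem hbS]; omega) hys fun j => by
            rcases mem_insert.mp (hysT j) with h | h
            · exact h ▸ mem_insert_self _ _
            · exact mem_insert_of_mem (mem_erase.mpr ⟨fun h' => hbys ⟨j, h'⟩, h⟩)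
        rwa [add_sub_assoc, ← sum_erase_eq_sub hbS]
      rw [sum_eq_single_of_mem b hbS fun c _ hcb => by simp [hbz, Ne.symm hcb]]
      simp only [hbz, ↓reduceIte, hsum]
      field_simp
      ring

variable {S : Finset α} {a : α} {k : ℕ} {x y : Fin k → α}

lemma sampleProb_nonneg (hw : ∀ c ∈ S, 0 ≤ w c) (hxS : ∀ j, x j ∈ S)
    (hx : Function.Injective x) : 0 ≤ sampleProb w (∑ c ∈ S, w c) x := by
  refine prod_nonneg fun j _ => div_nonneg (hw _ (hxS j)) ?_
  rw [filter_lt_eq_initSeg, ← sum_sdiff_image_eq_sub hx.injOn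
    (image_subset_iff.mpr fun l _ => hxS l)]
  exact sum_nonneg fun c hc => hw c (mem_sdiff.mp hc).1

lemma headsProb_mem_Icc (ha : a ∉ S) (hw : ∀ c ∈ insert a S, 0 < w c) (hxS : ∀ j, x j ∈ S)
    (hx : Function.Injective x) (hyT : ∀ j, y j ∈ insert a S) (hy : Function.Injective y)
    (j : Fin k) (hcomp : ∀ l : Fin k, l.val < j.val → y l = carry a x y l ∨ y l = x l) :
    headsProb w a (∑ c ∈ insert a S, w c) x y j ∈ Set.Icc 0 1 := by
  have hc : carry a x y j ∈ insert a S \ (initSeg k j).image y := by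
    refine mem_sdiff.mpr ⟨?_, (insert_image_eq_insert_carry ha hxS hx j j.isLt.le hcomp).2⟩
    exact insert_subset_insert a (image_subset_iff.mpr fun l _ => hxS l)
      (carry_mem_insert_image ha hxS hx j.isLt.le hcomp)
  have hden : ∑ c ∈ insert a S, w c - ∑ l ∈ univ.filter (· < j), w (y l) =
      ∑ c ∈ insert a S \ (initSeg k j).image y, w c := by
    rw [filter_lt_eq_initSeg, sum_sdiff_image_eq_sub hy.injOn
      (image_subset_iff.mpr fun l _ => hyT l)]
  have hpos := hw _ (mem_sdiff.mp hc).1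
  have hle := single_le_sum (fun c hc => (hw c (mem_sdiff.mp hc).1).le) hc
  rw [headsProb, hden]
  exact ⟨div_nonneg hpos.le (hpos.le.trans hle), div_le_one_of_le₀ hle (hpos.le.trans hle)⟩

lemma cascadeProb_nonneg (ha : a ∉ S) (hw : ∀ c ∈ insert a S, 0 < w c) (hxS : ∀ j, x j ∈ S)
    (hx : Function.Injective x) (hyT : ∀ j, y j ∈ insert a S) (hy : Function.Injective y) :
    0 ≤ cascadeProb w a (∑ c ∈ insert a S, w c) x y := by
  by_cases hcomp : ∀ l, y l = carry a x y l ∨ y l = x l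
  · refine prod_nonneg fun j _ => ?_
    obtain ⟨h0, h1⟩ := headsProb_mem_Icc w ha hw hxS hx hyT hy j fun l _ => hcomp l
    rw [cascadeFactor]
    split_ifs <;> linarith
  · push Not at hcomp
    obtain ⟨l, h₁, h₂⟩ := hcomp
    exact (prod_eq_zero (mem_univ l) (cascadeFactor_eq_zero w h₁ h₂)).symm.le

end CascadeProb

section CoinFlip

variable {Ω α : Type*} [MeasurableSpace Ω] {μ : Measure Ω}

lemma measure_inter_eq_of_coin [DecidableEq α] [IsFiniteMeasure μ] {A B : Set Ω}
    (hB : MeasurableSet B) {r : ℝ} (hr : r ∈ Set.Icc 0 1)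
    (hBA : μ (B ∩ A) = ENNReal.ofReal r * μ A) {f : Ω → α} {c d : α} (hcd : c ≠ d)
    (hf : ∀ ω ∈ A, (ω ∈ B → f ω = c) ∧ (ω ∉ B → f ω = d)) (v : α) :
    μ (A ∩ {ω | f ω = v}) =
      ENNReal.ofReal (if v = c then r else if v = d then 1 - r else 0) * μ A := by
  by_cases hvc : v = c
  · have hset : A ∩ {ω | f ω = v} = B ∩ A := by
      ext ω
      refine ⟨fun ⟨hA, hfv⟩ => ⟨by_contra fun hB' => hcd ?_, hA⟩,
        fun ⟨hB', hA⟩ => ⟨hA, ((hf ω hA).1 hB').trans hvc.symm⟩⟩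
      rw [← hvc, ← hfv, (hf ω hA).2 hB']
    rw [hset, hBA, if_pos hvc]
  by_cases hvd : v = d
  · have hset : A ∩ {ω | f ω = v} = A \ B := by
      ext ω
      refine ⟨fun ⟨hA, hfv⟩ => ⟨hA, fun hB' => hcd ?_⟩,
        fun ⟨hA, hB'⟩ => ⟨hA, ((hf ω hA).2 hB').trans hvd.symm⟩⟩
      rw [← hvd, ← hfv, (hf ω hA).1 hB']
    have hsplit := measure_inter_add_sdiff (μ := μ) A hB
    have hsplit' : ENNReal.ofReal r * μ A + ENNReal.ofReal (1 - r) * μ A = μ A := by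
      rw [← add_mul, ← ENNReal.ofReal_add hr.1 (by linarith [hr.2]), add_sub_cancel,
        ENNReal.ofReal_one, one_mul]
    rw [Set.inter_comm, hBA] at hsplit
    rw [hset, if_neg hvc, if_pos hvd]
    exact (ENNReal.add_right_inj (ENNReal.mul_ne_top ENNReal.ofReal_ne_top
      (measure_ne_top μ A))).mp (hsplit.trans hsplit'.symm)
  · have hset : A ∩ {ω | f ω = v} = ∅ := by
      ext ω
      simp only [Set.mem_inter_iff, Set.mem_empty_iff_false, iff_false, not_and]
      intro hA hfv
      by_cases hB' : ω ∈ B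
      exacts [hvc (hfv ▸ (hf ω hA).1 hB'), hvd (hfv ▸ (hf ω hA).2 hB')]
    rw [hset, if_neg hvc, if_neg hvd, measure_empty, ENNReal.ofReal_zero, zero_mul]

lemma measure_eq_sum_inter_preimage {β : Type*} {E : Set Ω} (hE : MeasurableSet E)
    {f : Ω → β} (s : Finset β) (hs : ∀ᵐ ω ∂μ, f ω ∈ s)
    (hf : ∀ b ∈ s, MeasurableSet (f ⁻¹' {b})) :
    μ E = ∑ b ∈ s, μ (E ∩ f ⁻¹' {b}) := by
  calc μ E = μ (E ∩ f ⁻¹' s) := (measure_inter_conull (ae_iff.mp hs)).symm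
    _ = μ (⋃ b ∈ s, E ∩ f ⁻¹' {b}) := by
      rw [← Set.inter_iUnion₂, Finset.set_biUnion_preimage_singleton]
    _ = ∑ b ∈ s, μ (E ∩ f ⁻¹' {b}) :=
      measure_biUnion_finset (fun b hb b' hb' hbb' =>
        ((Set.pairwiseDisjoint_fiber f s) hb hb' hbb').mono Set.inter_subset_right
          Set.inter_subset_right) fun b hb => hE.inter (hf b hb)

end CoinFlip

section Update

variable {Ω α : Type*} [MeasurableSpace Ω] {k : ℕ}

structure IsSampleWithoutReplacement_s9 (μ : Measure Ω) (w : α → ℝ) (S : Finset α)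
    (X : Fin k → Ω → α) : Prop where
  ae_injective_mem : ∀ᵐ ω ∂μ, Function.Injective (fun j => X j ω) ∧ ∀ j, X j ω ∈ S
  measure_eq : ∀ x : Fin k → α, (∀ j, x j ∈ S) → Function.Injective x →
    μ {ω | ∀ j, X j ω = x j} = ENNReal.ofReal (sampleProb w (∑ c ∈ S, w c) x)

variable [DecidableEq α]

structure IsCascadeUpdate (μ : Measure Ω) (w : α → ℝ) (S : Finset α) (a : α)
    (X X' : Fin k → Ω → α) (B : Fin k → Set Ω) : Prop where
  measurableSet_coin : ∀ i, MeasurableSet (B i)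
  first : ∀ (h0 : 0 < k) (ω : Ω),
    (ω ∈ B ⟨0, h0⟩ → X' ⟨0, h0⟩ ω = a) ∧ (ω ∉ B ⟨0, h0⟩ → X' ⟨0, h0⟩ ω = X ⟨0, h0⟩ ω)
  succ : ∀ (i : ℕ) (hi : i + 1 < k) (ω : Ω) (Z : α),
    insert a ((univ.filter fun l : Fin k => l.val ≤ i).image fun l => X l ω) \
        ((univ.filter fun l : Fin k => l.val ≤ i).image fun l => X' l ω) = {Z} →
      (ω ∈ B ⟨i + 1, hi⟩ → X' ⟨i + 1, hi⟩ ω = Z) ∧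
        (ω ∉ B ⟨i + 1, hi⟩ → X' ⟨i + 1, hi⟩ ω = X ⟨i + 1, hi⟩ ω)
  coin_prob : ∀ (i : Fin k) (x y : Fin k → α) (Z : α),
    insert a ((univ.filter (· < i)).image x) \ ((univ.filter (· < i)).image y) = {Z} →
      μ (B i ∩ {ω | (∀ l, X l ω = x l) ∧ ∀ l, l < i → X' l ω = y l}) =
        ENNReal.ofReal (w Z / ∑ c ∈ insert a S \ ((univ.filter (· < i)).image y), w c) *
          μ {ω | (∀ l, X l ω = x l) ∧ ∀ l, l < i → X' l ω = y l}

namespace IsCascadeUpdate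

variable {μ : Measure Ω} {w : α → ℝ} {S : Finset α} {a : α} {X X' : Fin k → Ω → α}
  {B : Fin k → Set Ω}

lemma output_eq (hU : IsCascadeUpdate μ w S a X X' B) (ha : a ∉ S) {ω : Ω}
    (hxS : ∀ j, X j ω ∈ S) (hx : Function.Injective fun j => X j ω) (j : Fin k) :
    (ω ∈ B j → X' j ω = carry a (X · ω) (X' · ω) j) ∧ (ω ∉ B j → X' j ω = X j ω) :=
  cascade_output_eq (y := (X' · ω)) (coin := (ω ∈ B ·)) ha hxS hx (hU.first · ω)
    (fun i hi Z => hU.succ i hi ω Z) j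

lemma output_eq_of_prefix (hU : IsCascadeUpdate μ w S a X X' B) (ha : a ∉ S)
    {x y : Fin k → α} (hxS : ∀ j, x j ∈ S) (hx : Function.Injective x) {i : ℕ} (hi : i < k)
    {ω : Ω} (hXω : ∀ l, X l ω = x l) (hX'ω : ∀ l : Fin k, l.val < i → X' l ω = y l) :
    (ω ∈ B ⟨i, hi⟩ → X' ⟨i, hi⟩ ω = carry a x y i) ∧
      (ω ∉ B ⟨i, hi⟩ → X' ⟨i, hi⟩ ω = x ⟨i, hi⟩) := by
  have hXeq : (X · ω) = x := funext hXω
  have h := hU.output_eq ha (hXeq ▸ hxS) (hXeq ▸ hx) ⟨i, hi⟩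
  rwa [hXeq, carry_congr a x i hX'ω, hXω] at h

lemma ae_injective_mem (hU : IsCascadeUpdate μ w S a X X' B) (ha : a ∉ S)
    (hX : IsSampleWithoutReplacement_s9 μ w S X) :
    ∀ᵐ ω ∂μ, Function.Injective (fun j => X' j ω) ∧ ∀ j, X' j ω ∈ insert a S := by
  filter_upwards [hX.ae_injective_mem] with ω ⟨hx, hxS⟩
  refine injective_and_mem_of_cascade ha hxS hx fun l => ?_
  by_cases hc : ω ∈ B l
  exacts [Or.inl ((hU.output_eq ha hxS hx l).1 hc), Or.inr ((hU.output_eq ha hxS hx l).2 hc)]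

lemma measure_prefix [IsFiniteMeasure μ] (hU : IsCascadeUpdate μ w S a X X' B) (ha : a ∉ S)
    (hw : ∀ c ∈ insert a S, 0 < w c) {x y : Fin k → α} (hxS : ∀ j, x j ∈ S)
    (hx : Function.Injective x) (hyT : ∀ j, y j ∈ insert a S) (hy : Function.Injective y) :
    ∀ i ≤ k, μ {ω | (∀ l, X l ω = x l) ∧ ∀ l : Fin k, l.val < i → X' l ω = y l} =
      ENNReal.ofReal (∏ j ∈ initSeg k i, cascadeFactor w a (∑ c ∈ insert a S, w c) x y j) *
        μ {ω | ∀ l, X l ω = x l}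
  | 0, _ => by simp [initSeg_zero]
  | i + 1, hi => by
    have hik : i < k := hi
    set li : Fin k := ⟨i, hik⟩
    set A := {ω | (∀ l, X l ω = x l) ∧ ∀ l : Fin k, l.val < i → X' l ω = y l}
    have ih := hU.measure_prefix ha hw hxS hx hyT hy i hik.le
    rw [initSeg_succ hik, prod_insert (by simp), setOf_and_forall_lt_succ hik]
    by_cases hcomp : ∀ l : Fin k, l.val < i → y l = carry a x y l ∨ y l = x l
    · have hr := headsProb_mem_Icc w ha hw hxS hx hyT hy li hcomp
      have hcoin : μ (B li ∩ A) =
          ENNReal.ofReal (headsProb w a (∑ c ∈ insert a S, w c) x y li) * μ A := by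
        have := hU.coin_prob li x y (carry a x y i) (by
          rw [filter_lt_eq_initSeg]; exact insert_sdiff_image_eq_carry ha hxS hx hik.le hcomp)
        rwa [sum_sdiff_image_eq_sub hy.injOn (image_subset_iff.mpr fun l _ => hyT l)] at this
      have hcx : carry a x y i ≠ x li := fun h =>
        apply_notMem_insert_image ha hxS hx li
          (h ▸ carry_mem_insert_image ha hxS hx hik.le hcomp)
      rw [measure_inter_eq_of_coin (hU.measurableSet_coin li) hr hcoin hcx
        (fun ω ⟨hXω, hX'ω⟩ => hU.output_eq_of_prefix ha hxS hx hik hXω hX'ω) (y li), ih,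
        ← mul_assoc, ← ENNReal.ofReal_mul]
      · rfl
      · split_ifs <;> linarith [hr.1, hr.2]
    · push Not at hcomp
      obtain ⟨l, hl, h₁, h₂⟩ := hcomp
      have h0 : ∏ j ∈ initSeg k i, cascadeFactor w a (∑ c ∈ insert a S, w c) x y j = 0 :=
        prod_eq_zero (mem_initSeg.mpr hl) (cascadeFactor_eq_zero w h₁ h₂)
      rw [h0, ENNReal.ofReal_zero, zero_mul] at ih
      rw [h0, mul_zero, ENNReal.ofReal_zero, zero_mul]
      exact measure_mono_null Set.inter_subset_left ih

end IsCascadeUpdate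

theorem IsSampleWithoutReplacement_s9.cascade [MeasurableSpace α] [MeasurableSingletonClass α]
    {μ : Measure Ω} [IsFiniteMeasure μ] {w : α → ℝ} {S : Finset α} {a : α}
    {X X' : Fin k → Ω → α} {B : Fin k → Set Ω} (hX : IsSampleWithoutReplacement_s9 μ w S X)
    (hU : IsCascadeUpdate μ w S a X X' B) (ha : a ∉ S) (hw : ∀ c ∈ insert a S, 0 < w c)
    (hk : k ≤ #S) (hXm : ∀ j, Measurable (X j)) (hX'm : ∀ j, Measurable (X' j)) :
    IsSampleWithoutReplacement_s9 μ w (insert a S) X' where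
  ae_injective_mem := hU.ae_injective_mem ha hX
  measure_eq y hyT hy := by
    have hE : MeasurableSet {ω | ∀ j, X' j ω = y j} := by
      convert measurable_pi_lambda _ hX'm (measurableSet_singleton y) using 1
      ext ω
      simp [funext_iff]
    have hterm (x : Fin k → α) (hx : x ∈ injTuples S k) :
        μ ({ω | ∀ j, X' j ω = y j} ∩ (fun ω j => X j ω) ⁻¹' {x}) =
          ENNReal.ofReal (sampleProb w (∑ c ∈ S, w c) x *
            cascadeProb w a (∑ c ∈ insert a S, w c) x y) := by
      obtain ⟨hxS, hx⟩ := mem_injTuples.mp hx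
      have hset : {ω | ∀ j, X' j ω = y j} ∩ (fun ω j => X j ω) ⁻¹' {x} =
          {ω | (∀ l, X l ω = x l) ∧ ∀ l : Fin k, l.val < k → X' l ω = y l} := by
        ext ω
        simp [funext_iff, and_comm]
      rw [hset, hU.measure_prefix ha hw hxS hx hyT hy k le_rfl, initSeg_self,
        hX.measure_eq x hxS hx, mul_comm, ← ENNReal.ofReal_mul
          (sampleProb_nonneg w (fun c hc => (hw c (mem_insert_of_mem hc)).le) hxS hx)]
      rfl
    have hnonneg (x : Fin k → α) (hx : x ∈ injTuples S k) :
        0 ≤ sampleProb w (∑ c ∈ S, w c) x * cascadeProb w a (∑ c ∈ insert a S, w c) x y := by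
      obtain ⟨hxS, hx⟩ := mem_injTuples.mp hx
      exact mul_nonneg (sampleProb_nonneg w (fun c hc => (hw c (mem_insert_of_mem hc)).le) hxS hx)
        (cascadeProb_nonneg w ha hw hxS hx hyT hy)
    rw [measure_eq_sum_inter_preimage hE (injTuples S k)
        (hX.ae_injective_mem.mono fun ω h => mem_injTuples.mpr ⟨h.2, h.1⟩)
        fun x _ => measurable_pi_lambda _ hXm (measurableSet_singleton x),
      sum_congr rfl hterm, ← ENNReal.ofReal_sum_of_nonneg hnonneg, sum_insert ha,
      sum_sampleProb_mul_cascadeProb w ha hw hk hy hyT]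

end Update

theorem statement9_general {Ω α : Type*} [MeasurableSpace Ω] [MeasurableSpace α]
    [MeasurableSingletonClass α] [DecidableEq α]
    (μ : Measure Ω) [IsProbabilityMeasure μ]
    (n : ℕ) (p : Fin n → α) (hp : Function.Injective p)
    (w : α → ℝ) (hw : ∀ i, 0 < w (p i))
    (k : ℕ)
    (Y : ℕ → Fin k → Ω → α) (hYmeas : ∀ m j, Measurable (Y m j))
    (B : ℕ → Fin k → Set Ω) (hBmeas : ∀ m i, MeasurableSet (B m i))
    -- base case: `Y k` is a `k`-sample without replacement from `S_k`
    (hbase_as : ∀ᵐ ω ∂μ, Function.Injective (fun j => Y k j ω) ∧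
      ∀ j, Y k j ω ∈ Finset.image p (Finset.univ.filter fun l : Fin n => l.val < k))
    (hbase_law : ∀ y : Fin k → α,
      (∀ j, y j ∈ Finset.image p (Finset.univ.filter fun l : Fin n => l.val < k)) →
      Function.Injective y →
      μ {ω | ∀ j, Y k j ω = y j} =
        ENNReal.ofReal (∏ j : Fin k,
          w (y j) /
            ((∑ c ∈ Finset.image p (Finset.univ.filter fun l : Fin n => l.val < k), w c)
              - ∑ l ∈ Finset.univ.filter (· < j), w (y l))))
    -- cascade update rules producing `Y (m+1)` from `Y m` with new element `p m`:
    (hY0 : ∀ (m : ℕ), k ≤ m → ∀ (hmn : m < n) (h0 : 0 < k) (ω : Ω),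
      (ω ∈ B m ⟨0, h0⟩ → Y (m + 1) ⟨0, h0⟩ ω = p ⟨m, hmn⟩) ∧
        (ω ∉ B m ⟨0, h0⟩ → Y (m + 1) ⟨0, h0⟩ ω = Y m ⟨0, h0⟩ ω))
    (hYsucc : ∀ (m : ℕ), k ≤ m → ∀ (hmn : m < n) (i : ℕ) (hi : i + 1 < k) (ω : Ω)
        (Z : α),
      insert (p ⟨m, hmn⟩)
            ((Finset.univ.filter fun l : Fin k => l.val ≤ i).image fun l => Y m l ω) \
          ((Finset.univ.filter fun l : Fin k => l.val ≤ i).image fun l =>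
            Y (m + 1) l ω) = {Z} →
      (ω ∈ B m ⟨i + 1, hi⟩ → Y (m + 1) ⟨i + 1, hi⟩ ω = Z) ∧
        (ω ∉ B m ⟨i + 1, hi⟩ → Y (m + 1) ⟨i + 1, hi⟩ ω = Y m ⟨i + 1, hi⟩ ω))
    -- the coin `B m i` lands heads with the appropriate conditional probability,
    -- independently of everything else:
    (hBcond : ∀ (m : ℕ), k ≤ m → ∀ (hmn : m < n) (i : Fin k) (x y : Fin k → α) (Z : α),
      insert (p ⟨m, hmn⟩) ((Finset.univ.filter (· < i)).image x) \
          ((Finset.univ.filter (· < i)).image y) = {Z} →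
      μ (B m i ∩ {ω | (∀ l, Y m l ω = x l) ∧ ∀ l, l < i → Y (m + 1) l ω = y l}) =
        ENNReal.ofReal (w Z /
            ∑ c ∈ (insert (p ⟨m, hmn⟩)
                (Finset.image p (Finset.univ.filter fun l : Fin n => l.val < m))) \
              ((Finset.univ.filter (· < i)).image y), w c) *
          μ {ω | (∀ l, Y m l ω = x l) ∧ ∀ l, l < i → Y (m + 1) l ω = y l}) :
    ∀ m : ℕ, k ≤ m → m ≤ n →
      (∀ᵐ ω ∂μ, Function.Injective (fun j => Y m j ω) ∧
        ∀ j, Y m j ω ∈ Finset.image p (Finset.univ.filter fun l : Fin n => l.val < m)) ∧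
      (∀ y : Fin k → α,
        (∀ j, y j ∈ Finset.image p (Finset.univ.filter fun l : Fin n => l.val < m)) →
        Function.Injective y →
        μ {ω | ∀ j, Y m j ω = y j} =
          ENNReal.ofReal (∏ j : Fin k,
            w (y j) /
              ((∑ c ∈ Finset.image p (Finset.univ.filter fun l : Fin n => l.val < m),
                  w c)
                - ∑ l ∈ Finset.univ.filter (· < j), w (y l)))) := by
  suffices h : ∀ m, k ≤ m → m ≤ n →
      IsSampleWithoutReplacement_s9 μ w ((initSeg n m).image p) (Y m) from
    fun m hkm hmn => ⟨(h m hkm hmn).ae_injective_mem, (h m hkm hmn).measure_eq⟩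
  intro m hkm
  induction m, hkm using Nat.le_induction with
  | base => exact fun _ => ⟨hbase_as, hbase_law⟩
  | succ m hkm ih =>
    intro hmn
    have hnew : p ⟨m, hmn⟩ ∉ (initSeg n m).image p := by simp [hp.eq_iff]
    have hpos : ∀ c ∈ insert (p ⟨m, hmn⟩) ((initSeg n m).image p), 0 < w c := by
      rw [← image_insert, ← initSeg_succ hmn]
      exact forall_mem_image.mpr fun l _ => hw l
    rw [initSeg_succ hmn, image_insert]
    exact (ih (by omega)).cascade ⟨hBmeas m, hY0 m hkm hmn, hYsucc m hkm hmn, hBcond m hkm hmn⟩ hnew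
      hpos (by rw [card_image_of_injective _ hp, card_initSeg (by omega)]; exact hkm)
      (hYmeas m) (hYmeas (m + 1))

/-- **correctness of Cascade Sampling over a stream.**  Let
`p 0, …, p (n-1)` be distinct elements with strictly positive weights and `k ≤ n`.
Write `S_m = {p 0, …, p (m-1)}`.  Suppose `Y k` is (distributed as) a `k`-sample without
replacement from `S_k`, and for each `k ≤ m < n` the tuple `Y (m+1)` is obtained from
`Y m` by the cascade update with the new element `a = p m` (update rules `hY0`, `hYsucc`;
coin flips `B m i` with the appropriate conditional probabilities, independent of
everything else, as in `hBcond`).  Then for every `k ≤ m ≤ n` the tuple `Y m` is a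
`k`-sample without replacement from `S_m`: almost surely its coordinates are pairwise
distinct elements of `S_m`, and every injective tuple `y` of elements of `S_m` has
probability `∏ j, w (y j) / (w (S_m) − ∑_{l < j} w (y l))`.  In particular this holds for
the single update step (`m + 1` from `m`), and for the output `Y n` after processing the
whole stream. -/
theorem statement9 {Ω α : Type*} [MeasurableSpace Ω] [MeasurableSpace α]
    [MeasurableSingletonClass α] [DecidableEq α]
    (μ : Measure Ω) [IsProbabilityMeasure μ]
    (n : ℕ) (p : Fin n → α) (hp : Function.Injective p)
    (w : α → ℝ) (hw : ∀ i, 0 < w (p i))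
    (k : ℕ) (hkn : k ≤ n)
    (Y : ℕ → Fin k → Ω → α) (hYmeas : ∀ m j, Measurable (Y m j))
    (B : ℕ → Fin k → Set Ω) (hBmeas : ∀ m i, MeasurableSet (B m i))
    -- base case: `Y k` is a `k`-sample without replacement from `S_k`
    (hbase_as : ∀ᵐ ω ∂μ, Function.Injective (fun j => Y k j ω) ∧
      ∀ j, Y k j ω ∈ Finset.image p (Finset.univ.filter fun l : Fin n => l.val < k))
    (hbase_law : ∀ y : Fin k → α,
      (∀ j, y j ∈ Finset.image p (Finset.univ.filter fun l : Fin n => l.val < k)) →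
      Function.Injective y →
      μ {ω | ∀ j, Y k j ω = y j} =
        ENNReal.ofReal (∏ j : Fin k,
          w (y j) /
            ((∑ c ∈ Finset.image p (Finset.univ.filter fun l : Fin n => l.val < k), w c)
              - ∑ l ∈ Finset.univ.filter (· < j), w (y l))))
    -- cascade update rules producing `Y (m+1)` from `Y m` with new element `p m`:
    (hY0 : ∀ (m : ℕ), k ≤ m → ∀ (hmn : m < n) (h0 : 0 < k) (ω : Ω),
      (ω ∈ B m ⟨0, h0⟩ → Y (m + 1) ⟨0, h0⟩ ω = p ⟨m, hmn⟩) ∧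
        (ω ∉ B m ⟨0, h0⟩ → Y (m + 1) ⟨0, h0⟩ ω = Y m ⟨0, h0⟩ ω))
    (hYsucc : ∀ (m : ℕ), k ≤ m → ∀ (hmn : m < n) (i : ℕ) (hi : i + 1 < k) (ω : Ω)
        (Z : α),
      insert (p ⟨m, hmn⟩)
            ((Finset.univ.filter fun l : Fin k => l.val ≤ i).image fun l => Y m l ω) \
          ((Finset.univ.filter fun l : Fin k => l.val ≤ i).image fun l =>
            Y (m + 1) l ω) = {Z} →
      (ω ∈ B m ⟨i + 1, hi⟩ → Y (m + 1) ⟨i + 1, hi⟩ ω = Z) ∧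
        (ω ∉ B m ⟨i + 1, hi⟩ → Y (m + 1) ⟨i + 1, hi⟩ ω = Y m ⟨i + 1, hi⟩ ω))
    -- the coin `B m i` lands heads with the appropriate conditional probability,
    -- independently of everything else:
    (hBcond : ∀ (m : ℕ), k ≤ m → ∀ (hmn : m < n) (i : Fin k) (x y : Fin k → α) (Z : α),
      insert (p ⟨m, hmn⟩) ((Finset.univ.filter (· < i)).image x) \
          ((Finset.univ.filter (· < i)).image y) = {Z} →
      μ (B m i ∩ {ω | (∀ l, Y m l ω = x l) ∧ ∀ l, l < i → Y (m + 1) l ω = y l}) =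
        ENNReal.ofReal (w Z /
            ∑ c ∈ (insert (p ⟨m, hmn⟩)
                (Finset.image p (Finset.univ.filter fun l : Fin n => l.val < m))) \
              ((Finset.univ.filter (· < i)).image y), w c) *
          μ {ω | (∀ l, Y m l ω = x l) ∧ ∀ l, l < i → Y (m + 1) l ω = y l}) :
    ∀ m : ℕ, k ≤ m → m ≤ n →
      (∀ᵐ ω ∂μ, Function.Injective (fun j => Y m j ω) ∧
        ∀ j, Y m j ω ∈ Finset.image p (Finset.univ.filter fun l : Fin n => l.val < m)) ∧
      (∀ y : Fin k → α,
        (∀ j, y j ∈ Finset.image p (Finset.univ.filter fun l : Fin n => l.val < m)) →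
        Function.Injective y →
        μ {ω | ∀ j, Y m j ω = y j} =
          ENNReal.ofReal (∏ j : Fin k,
            w (y j) /
              ((∑ c ∈ Finset.image p (Finset.univ.filter fun l : Fin n => l.val < m),
                  w c)
                - ∑ l ∈ Finset.univ.filter (· < j), w (y l)))) :=
  statement9_general μ n p hp w hw k Y hYmeas B hBmeas hbase_as hbase_law hY0 hYsucc hBcond
end
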